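/- On any preference domain satisfying Top-one Richness, a mechanism is locally unanimous and group strategy-proof if and only if it equals the TTC mechanism. -/
import Mathlib


/- Housing market model (Shapley–Scarf). Agents and objects are identified:
the type `I` is the (finite) set of agents, and object `i` (the endowment of
agent `i`) is identified with `i` itself. A strict preference is a linear
order on `I` (viewed as the set of objects); a preference domain is a set of
linear orders; a mechanism maps preference profiles to assignments `I → I`
(an allocation being a bijective assignment). -/

open Finset

variable {I : Type*} [DecidableEq I]

/-- The most preferred object of `S` under the linear order `p`
(`d` is a junk default, used only when `S = ∅`). -/
def favIn (p : LinearOrder I) (S : Finset I) (d : I) : I :=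
  if h : S.Nonempty then @Finset.max' I p S h else d

/-- The top choice of preference `p` (`d` is a junk default, used only if `I` is empty). -/
def topOf [Fintype I] (p : LinearOrder I) (d : I) : I := favIn p Finset.univ d

/-- The agents of `S` lying on a cycle of the pointing map `fun i => fav i S`
(each agent points to the owner of his favorite remaining object; a cycle
closes within at most `S.card` steps). -/
def cyclicAgents (fav : I → Finset I → I) (S : Finset I) : Finset I :=
  S.filter fun i => ∃ k ∈ Finset.range S.card, (fun j => fav j S)^[k + 1] i = i

lemma cyclicAgents_subset (fav : I → Finset I → I) (S : Finset I) :
    cyclicAgents fav S ⊆ S := Finset.filter_subset _ _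

/-- The TTC procedure on the set `S` of remaining agents: every agent of `S`
lying on a pointing cycle receives the object owned by the agent he points to
and is removed; the procedure is then repeated on the remaining agents.
(Agents outside `S` keep their endowments; when the pointing map sends `S`
into `S` — as is always the case for pointing maps induced by preferences —
there always is a cycle, so the degenerate `else` branch is never reached.) -/
def TTCaux (fav : I → Finset I → I) (S : Finset I) : I → I :=
  if hC : (cyclicAgents fav S).Nonempty then fun i =>
    if i ∈ cyclicAgents fav S then fav i S else TTCaux fav (S \ cyclicAgents fav S) i
  else id
termination_by S.card
decreasing_by
  exact Finset.card_lt_card (Finset.sdiff_ssubset (cyclicAgents_subset fav S) hC)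

/-- The Top Trading Cycles mechanism. -/
def TTC [Fintype I] (P : I → LinearOrder I) : I → I :=
  TTCaux (fun i S => favIn (P i) S i) Finset.univ

section Axioms

variable [Fintype I]

/-- `ψ` is locally unanimous on the domain `D`: whenever some nonempty set `J`
of agents admits a unanimously best suballocation `μ` (a bijection of `J` onto
its endowment set `O_J = J` giving every member his top choice), `ψ` implements `μ` on `J`. -/
def LocallyUnanimous (D : Set (LinearOrder I)) (ψ : (I → LinearOrder I) → I → I) : Prop :=
  ∀ P : I → LinearOrder I, (∀ i, P i ∈ D) →
    ∀ J : Finset I, J.Nonempty → ∀ μ : I → I, Set.BijOn μ ↑J ↑J →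
      (∀ i ∈ J, μ i = topOf (P i) i) → ∀ i ∈ J, ψ P i = μ i

/-- Strategy-proofness of `ψ` on the domain `D`. -/
def StrategyProof (D : Set (LinearOrder I)) (ψ : (I → LinearOrder I) → I → I) : Prop :=
  ∀ P : I → LinearOrder I, (∀ i, P i ∈ D) → ∀ i : I, ∀ q ∈ D,
    ¬ (P i).lt (ψ P i) (ψ (Function.update P i q) i)

/-- Group strategy-proofness of `ψ` on the domain `D`. -/
def GroupStrategyProof (D : Set (LinearOrder I)) (ψ : (I → LinearOrder I) → I → I) : Prop :=
  ∀ P P' : I → LinearOrder I, (∀ i, P i ∈ D) → (∀ i, P' i ∈ D) →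
    ∀ J : Finset I, J.Nonempty → (∀ i ∉ J, P' i = P i) →
    ¬ ((∀ i ∈ J, (P i).le (ψ P i) (ψ P' i)) ∧ ∃ j ∈ J, (P j).lt (ψ P j) (ψ P' j))

/-- Individual rationality of `ψ` on the domain `D` (agent `i`'s endowment is `i`). -/
def IndividuallyRational (D : Set (LinearOrder I)) (ψ : (I → LinearOrder I) → I → I) : Prop :=
  ∀ P : I → LinearOrder I, (∀ i, P i ∈ D) → ∀ i : I, (P i).le i (ψ P i)

/-- Top-one Richness of the domain `D`. -/
def TopOneRich (D : Set (LinearOrder I)) : Prop :=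
  ∀ o : I, ∃ p ∈ D, topOf p o = o

/-- Top-two Richness of the domain `D`: any two distinct objects can be
reported as the top two choices, in either order. -/
def TopTwoRich (D : Set (LinearOrder I)) : Prop :=
  ∀ o o' : I, o ≠ o' → ∃ p ∈ D, topOf p o = o ∧ ∀ x : I, x ≠ o → p.le x o'

/-- `J` forms a cycle of the pointing map `f`: `J` is nonempty, closed under
`f`, and every member is reachable from every member by iterating `f`. -/
def IsCycleIn (f : I → I) (J : Finset I) : Prop :=
  J.Nonempty ∧ (∀ i ∈ J, f i ∈ J) ∧ ∀ i ∈ J, ∀ j ∈ J, ∃ k : ℕ, f^[k] i = j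

end Axioms

section Lemmas
variable {I : Type*} [DecidableEq I]

lemma favIn_mem (p : LinearOrder I) {S : Finset I} (h : S.Nonempty) (d : I) :
    favIn p S d ∈ S := by
  unfold favIn; rw [dif_pos h]; exact @Finset.max'_mem I p S h

lemma le_favIn (p : LinearOrder I) {S : Finset I} {x : I} (hx : x ∈ S) (d : I) :
    p.le x (favIn p S d) := by
  unfold favIn; rw [dif_pos ⟨x, hx⟩]; exact @Finset.le_max' I p S x hx

lemma topOf_indep [Fintype I] (p : LinearOrder I) (h : (Finset.univ : Finset I).Nonempty)
    (d d' : I) : topOf p d = topOf p d' := by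
  unfold topOf favIn; rw [dif_pos h, dif_pos h]

section Iterates
variable {g : I → I} {S : Finset I}

lemma iterate_mem (hg : ∀ i ∈ S, g i ∈ S) {i : I} (hi : i ∈ S) :
    ∀ m, g^[m] i ∈ S := by
  intro m; induction m with
  | zero => simpa
  | succ m ih => rw [Function.iterate_succ_apply']; exact hg _ ih

lemma iterate_period_mul {i : I} {m : ℕ} (hper : g^[m] i = i) :
    ∀ t, g^[m * t] i = i := by
  intro t; induction t with
  | zero => simp
  | succ t ih =>
    have : m * (t + 1) = m * t + m := by ring
    rw [this, Function.iterate_add_apply, hper, ih]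

lemma exists_periodic_pt (hg : ∀ i ∈ S, g i ∈ S) (hS : S.Nonempty) :
    ∃ j ∈ S, ∃ m, 0 < m ∧ g^[m] j = j := by
  obtain ⟨i, hi⟩ := hS
  have hmaps : ∀ t ∈ Finset.range (S.card + 1), g^[t] i ∈ S := fun t _ => iterate_mem hg hi t
  have hcard : S.card < (Finset.range (S.card + 1)).card := by simp
  obtain ⟨a, ha, b, hb, hne, heq⟩ :=
    Finset.exists_ne_map_eq_of_card_lt_of_maps_to hcard hmaps
  rcases Nat.lt_or_ge a b with hab | hab
  · refine ⟨g^[a] i, iterate_mem hg hi a, b - a, by omega, ?_⟩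
    rw [← Function.iterate_add_apply, Nat.sub_add_cancel (Nat.le_of_lt hab), ← heq]
  · have hab' : b < a := by omega
    refine ⟨g^[b] i, iterate_mem hg hi b, a - b, by omega, ?_⟩
    rw [← Function.iterate_add_apply, Nat.sub_add_cancel (Nat.le_of_lt hab'), heq]

/-- a periodic point of a map sending `S` into `S` has a period at most `S.card`. -/
lemma exists_small_period (hg : ∀ i ∈ S, g i ∈ S) {i : I} (hi : i ∈ S)
    {m : ℕ} (hm : 0 < m) (hper : g^[m] i = i) :
    ∃ k ∈ Finset.range S.card, g^[k + 1] i = i := by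
  classical
  have hex : ∃ n, 0 < n ∧ g^[n] i = i := ⟨m, hm, hper⟩
  set p := Nat.find hex with hp
  obtain ⟨hppos, hpper⟩ := Nat.find_spec hex
  -- the orbit map is injective on `range p`
  have hkey : ∀ a b, a < b → b < p → g^[a] i = g^[b] i → False := by
    intro a b h hb hab
    have key : g^[p - b + a] i = i := by
      have h1 : g^[p - b] (g^[b] i) = i := by
        rw [← Function.iterate_add_apply, Nat.sub_add_cancel (Nat.le_of_lt hb)]; exact hpper
      rw [← hab, ← Function.iterate_add_apply] at h1
      exact h1
    have hlt : p - b + a < p := by omega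
    have hpos : 0 < p - b + a := by omega
    exact Nat.find_min hex hlt ⟨hpos, key⟩
  have hinj : Set.InjOn (fun t => g^[t] i) ↑(Finset.range p) := by
    intro a ha b hb hab
    simp only [Finset.coe_range, Set.mem_Iio] at ha hb
    simp only at hab
    rcases lt_trichotomy a b with h | h | h
    · exact absurd (hkey a b h hb hab) (fun x => x)
    · exact h
    · exact absurd (hkey b a h ha hab.symm) (fun x => x)
  have hple : p ≤ S.card := by
    have himg : (Finset.range p).image (fun t => g^[t] i) ⊆ S := by
      intro x hx
      simp only [Finset.mem_image] at hx
      obtain ⟨t, _, rfl⟩ := hx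
      exact iterate_mem hg hi t
    calc p = ((Finset.range p).image (fun t => g^[t] i)).card := by
              rw [Finset.card_image_of_injOn hinj, Finset.card_range]
      _ ≤ S.card := Finset.card_le_card himg
  refine ⟨p - 1, Finset.mem_range.mpr (by omega), ?_⟩
  have : p - 1 + 1 = p := by omega
  rw [this]; exact hpper

end Iterates
end Lemmas

section CyclicLemmas
variable {I : Type*} [DecidableEq I] {f : I → Finset I → I} {S : Finset I}

lemma mem_cyclicAgents_of_periodic (hg : ∀ j ∈ S, f j S ∈ S) {i : I} (hi : i ∈ S)
    {m : ℕ} (hm : 0 < m) (hper : (fun j => f j S)^[m] i = i) :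
    i ∈ cyclicAgents f S := by
  obtain ⟨k, hk, hk2⟩ := exists_small_period hg hi hm hper
  exact Finset.mem_filter.mpr ⟨hi, k, hk, hk2⟩

lemma periodic_of_mem_cyclicAgents {i : I} (hi : i ∈ cyclicAgents f S) :
    i ∈ S ∧ ∃ m, 0 < m ∧ (fun j => f j S)^[m] i = i := by
  obtain ⟨h1, k, _, hk2⟩ := Finset.mem_filter.mp hi
  exact ⟨h1, k + 1, Nat.succ_pos k, hk2⟩

lemma cyclicAgents_nonempty (hg : ∀ j ∈ S, f j S ∈ S) (hS : S.Nonempty) :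
    (cyclicAgents f S).Nonempty := by
  obtain ⟨j, hj, m, hm, hper⟩ := exists_periodic_pt hg hS
  exact ⟨j, mem_cyclicAgents_of_periodic hg hj hm hper⟩

lemma cyclicAgents_mapsTo (hg : ∀ j ∈ S, f j S ∈ S) {i : I} (hi : i ∈ cyclicAgents f S) :
    f i S ∈ cyclicAgents f S := by
  obtain ⟨hiS, m, hm, hper⟩ := periodic_of_mem_cyclicAgents hi
  set g := fun j => f j S with hgdef
  refine mem_cyclicAgents_of_periodic hg (hg i hiS) hm ?_
  show g^[m] (g i) = g i
  rw [← Function.iterate_succ_apply, Function.iterate_succ_apply', hper]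

lemma cyclicAgents_injOn (hg : ∀ j ∈ S, f j S ∈ S) :
    Set.InjOn (fun j => f j S) ↑(cyclicAgents f S) := by
  intro a ha b hb hab
  simp only [Finset.mem_coe] at ha hb
  obtain ⟨haS, m, hm, hma⟩ := periodic_of_mem_cyclicAgents ha
  obtain ⟨hbS, n, hn, hnb⟩ := periodic_of_mem_cyclicAgents hb
  set g := fun j => f j S with hgdef
  have hMa : g^[m * n] a = a := iterate_period_mul hma n
  have hMb : g^[m * n] b = b := by rw [mul_comm]; exact iterate_period_mul hnb m
  have hpos : 0 < m * n := Nat.mul_pos hm hn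
  calc a = g^[m * n] a := hMa.symm
    _ = g^[m * n - 1] (g a) := by
        rw [← Function.iterate_succ_apply]; congr 1; omega
    _ = g^[m * n - 1] (g b) := by rw [show g a = g b from hab]
    _ = g^[m * n] b := by rw [← Function.iterate_succ_apply]; congr 1; omega
    _ = b := hMb

lemma cyclicAgents_surjOn (hg : ∀ j ∈ S, f j S ∈ S) :
    Set.SurjOn (fun j => f j S) ↑(cyclicAgents f S) ↑(cyclicAgents f S) := by
  intro i hi
  simp only [Finset.mem_coe] at hi
  obtain ⟨hiS, m, hm, hper⟩ := periodic_of_mem_cyclicAgents hi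
  set g := fun j => f j S with hgdef
  have hj : g^[m - 1] i ∈ cyclicAgents f S := by
    refine mem_cyclicAgents_of_periodic hg (iterate_mem hg hiS (m - 1)) hm ?_
    show (fun j => f j S)^[m] ((fun j => f j S)^[m-1] i) = (fun j => f j S)^[m-1] i
    calc g^[m] (g^[m-1] i) = g^[m + (m-1)] i := (Function.iterate_add_apply g m (m-1) i).symm
      _ = g^[(m-1) + m] i := by rw [Nat.add_comm]
      _ = g^[m-1] (g^[m] i) := Function.iterate_add_apply g (m-1) m i
      _ = g^[m-1] i := by rw [hper]
  refine ⟨g^[m - 1] i, hj, ?_⟩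
  show g (g^[m - 1] i) = i
  calc g (g^[m-1] i) = g^[m-1+1] i := (Function.iterate_succ_apply' g (m-1) i).symm
    _ = i := by rw [show m - 1 + 1 = m by omega, hper]

lemma cyclicAgents_bijOn (hg : ∀ j ∈ S, f j S ∈ S) :
    Set.BijOn (fun j => f j S) ↑(cyclicAgents f S) ↑(cyclicAgents f S) :=
  ⟨fun i hi => cyclicAgents_mapsTo hg hi, cyclicAgents_injOn hg, cyclicAgents_surjOn hg⟩

end CyclicLemmas

section TTCauxLemmas
variable {I : Type*} [DecidableEq I] {f : I → Finset I → I}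

lemma TTCaux_eq (f : I → Finset I → I) (S : Finset I) :
    TTCaux f S = if hC : (cyclicAgents f S).Nonempty then (fun i =>
      if i ∈ cyclicAgents f S then f i S else TTCaux f (S \ cyclicAgents f S) i)
    else id := by
  rw [TTCaux]

lemma TTCaux_of_mem_cyclic {S : Finset I} {i : I} (hi : i ∈ cyclicAgents f S) :
    TTCaux f S i = f i S := by
  rw [TTCaux_eq, dif_pos ⟨i, hi⟩, if_pos hi]

lemma TTCaux_of_not_mem_cyclic {S : Finset I} {i : I} (hi : i ∉ cyclicAgents f S) :
    TTCaux f S i = TTCaux f (S \ cyclicAgents f S) i := by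
  by_cases hC : (cyclicAgents f S).Nonempty
  · rw [TTCaux_eq, dif_pos hC, if_neg hi]
  · rw [Finset.not_nonempty_iff_eq_empty] at hC
    rw [hC, Finset.sdiff_empty]

lemma TTCaux_bijOn (hf : ∀ (S : Finset I), ∀ j ∈ S, f j S ∈ S) :
    ∀ S : Finset I, Set.BijOn (TTCaux f S) ↑S ↑S := by
  intro S
  induction S using Finset.strongInduction with
  | _ S ih =>
    by_cases hC : (cyclicAgents f S).Nonempty
    · set C := cyclicAgents f S with hCdef
      have hsub : C ⊆ S := cyclicAgents_subset f S
      have bij1 : Set.BijOn (TTCaux f S) ↑C ↑C :=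
        (cyclicAgents_bijOn (hf S)).congr (fun i hi => (TTCaux_of_mem_cyclic hi).symm)
      have bij2 : Set.BijOn (TTCaux f S) ↑(S \ C) ↑(S \ C) := by
        refine (ih (S \ C) (Finset.sdiff_ssubset hsub hC)).congr ?_
        intro i hi
        simp only [Finset.coe_sdiff, Set.mem_diff, Finset.mem_coe] at hi
        exact (TTCaux_of_not_mem_cyclic hi.2).symm
      have hdisj : Disjoint (↑C : Set I) ↑(S \ C) := by
        simp only [Finset.coe_sdiff]
        exact Set.disjoint_sdiff_right.mono_left (le_refl _)
      have hinj : Set.InjOn (TTCaux f S) (↑C ∪ ↑(S \ C)) := by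
        rw [Set.injOn_union hdisj]
        refine ⟨bij1.injOn, bij2.injOn, ?_⟩
        intro x hx y hy hxy
        have h1 : TTCaux f S x ∈ (↑C : Set I) := bij1.mapsTo hx
        have h2 : TTCaux f S y ∈ (↑(S \ C) : Set I) := bij2.mapsTo hy
        rw [hxy] at h1
        exact Set.disjoint_left.mp hdisj h1 h2
      have hunion : (↑C : Set I) ∪ ↑(S \ C) = ↑S := by
        rw [← Finset.coe_union, Finset.union_sdiff_of_subset hsub]
      have := (bij1.union bij2 hinj)
      rwa [hunion] at this
    · rw [TTCaux_eq, dif_neg hC]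
      exact Set.bijOn_id _
end TTCauxLemmas

section CoreLemmas
variable {I : Type*} [DecidableEq I]

/-- The pointing system induced by a preference profile. -/
def ttcFav (P : I → LinearOrder I) : I → Finset I → I := fun i S => favIn (P i) S i

lemma ttcFav_mem (P : I → LinearOrder I) (S : Finset I) : ∀ j ∈ S, ttcFav P j S ∈ S :=
  fun j hj => favIn_mem (P j) ⟨j, hj⟩ j

lemma TTC_def [Fintype I] (P : I → LinearOrder I) :
    TTC P = TTCaux (ttcFav P) Finset.univ := rfl

lemma TTC_injective [Fintype I] (P : I → LinearOrder I) : Function.Injective (TTC P) := by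
  have h := TTCaux_bijOn (f := ttcFav P) (fun S => ttcFav_mem P S) Finset.univ
  rw [TTC_def]
  intro a b hab
  exact h.injOn (by simp) (by simp) hab

lemma mapsTo_of_compl [Fintype I] {φ : I → I} (hinj : Function.Injective φ) {S : Finset I}
    (h : ∀ i ∉ S, φ i ∉ S) : ∀ i ∈ S, φ i ∈ S := by
  intro i hi
  by_contra hout
  set R := Finset.univ \ S with hR
  have hmem : ∀ j ∈ R, φ j ∈ R := by
    intro j hj
    rw [hR, Finset.mem_sdiff] at hj ⊢
    exact ⟨Finset.mem_univ _, h j hj.2⟩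
  have himg : R.image φ = R := by
    refine Finset.eq_of_subset_of_card_le ?_ ?_
    · intro x hx
      obtain ⟨j, hj, rfl⟩ := Finset.mem_image.mp hx
      exact hmem j hj
    · rw [Finset.card_image_of_injective _ hinj]
  have hiR : φ i ∈ R := by rw [hR, Finset.mem_sdiff]; exact ⟨Finset.mem_univ _, hout⟩
  rw [← himg] at hiR
  obtain ⟨j, hj, hji⟩ := Finset.mem_image.mp hiR
  have : j = i := hinj hji
  rw [this, hR, Finset.mem_sdiff] at hj
  exact hj.2 hi

/-- TTC is in the strict core: no coalition `K` can reallocate its own endowments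
making everyone weakly better off without being the TTC suballocation itself. -/
lemma TTC_core_aux [Fintype I] (P : I → LinearOrder I) :
    ∀ S : Finset I, (∀ i ∈ S, TTCaux (ttcFav P) S i = TTC P i) →
    ∀ K : Finset I, K ⊆ S → ∀ σ : I → I, Set.BijOn σ ↑K ↑K →
    (∀ i ∈ K, (P i).le (TTC P i) (σ i)) → ∀ i ∈ K, σ i = TTC P i := by
  intro S
  induction S using Finset.strongInduction with
  | _ S ih =>
    intro hcompat K hKS σ hσ hle i hiK
    have hS : S.Nonempty := ⟨i, hKS hiK⟩
    have hg := ttcFav_mem P S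
    set C := cyclicAgents (ttcFav P) S with hCdef
    have hCne : C.Nonempty := cyclicAgents_nonempty hg hS
    have hKC : ∀ j ∈ K, j ∈ C → σ j = TTC P j := by
      intro j hjK hjC
      have hT : TTC P j = ttcFav P j S := by
        rw [← hcompat j (hKS hjK), TTCaux_of_mem_cyclic hjC]
      have hσjS : σ j ∈ S := hKS (hσ.mapsTo hjK)
      have h1 : (P j).le (σ j) (TTC P j) := by
        rw [hT]; exact le_favIn (P j) hσjS j
      exact @le_antisymm I (P j).toPartialOrder (σ j) (TTC P j) h1 (hle j hjK)
    by_cases hiC : i ∈ C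
    · exact hKC i hiK hiC
    · -- recurse on S \ C with K2 = K \ C
      set K1 := K ∩ C with hK1
      set K2 := K \ C with hK2
      have himg : K1.image σ = K1 := by
        refine Finset.eq_of_subset_of_card_le ?_ ?_
        · intro x hx
          obtain ⟨j, hj, rfl⟩ := Finset.mem_image.mp hx
          obtain ⟨hjK, hjC⟩ := Finset.mem_inter.mp hj
          have hσT : σ j = TTC P j := hKC j hjK hjC
          have hT : TTC P j = ttcFav P j S := by
            rw [← hcompat j (hKS hjK), TTCaux_of_mem_cyclic hjC]
          rw [Finset.mem_inter]
          refine ⟨hσ.mapsTo hjK, ?_⟩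
          rw [hσT, hT]
          exact cyclicAgents_mapsTo hg hjC
        · rw [Finset.card_image_of_injOn (hσ.injOn.mono
            (Finset.coe_subset.mpr Finset.inter_subset_left))]
      have hmapsTo2 : ∀ j ∈ K2, σ j ∈ K2 := by
        intro j hj
        obtain ⟨hjK, hjC⟩ := Finset.mem_sdiff.mp hj
        have hσjK : σ j ∈ K := hσ.mapsTo hjK
        rw [Finset.mem_sdiff]
        refine ⟨hσjK, fun hσjC => ?_⟩
        have : σ j ∈ K1 := Finset.mem_inter.mpr ⟨hσjK, hσjC⟩
        rw [← himg] at this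
        obtain ⟨x, hx, hxj⟩ := Finset.mem_image.mp this
        have : x = j := hσ.injOn (Finset.mem_inter.mp hx).1 hjK hxj
        rw [this] at hx
        exact hjC (Finset.mem_inter.mp hx).2
      have hsurj2 : Set.SurjOn σ ↑K2 ↑K2 := by
        intro y hy
        have hyK2 : y ∈ K2 := hy
        obtain ⟨hyK, hyC⟩ := Finset.mem_sdiff.mp hyK2
        obtain ⟨x, hx, hxy⟩ := hσ.surjOn hyK
        have hxK : x ∈ K := hx
        by_cases hxC : x ∈ C
        · exfalso
          have : σ x ∈ K1 := by
            rw [← himg]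
            exact Finset.mem_image_of_mem σ (Finset.mem_inter.mpr ⟨hxK, hxC⟩)
          rw [hxy] at this
          exact hyC (Finset.mem_inter.mp this).2
        · exact ⟨x, Finset.mem_coe.mpr (Finset.mem_sdiff.mpr ⟨hxK, hxC⟩), hxy⟩
      have hbij2 : Set.BijOn σ ↑K2 ↑K2 :=
        ⟨fun j hj => hmapsTo2 j hj, hσ.injOn.mono
          (Finset.coe_subset.mpr Finset.sdiff_subset), hsurj2⟩
      have hcompat' : ∀ j ∈ S \ C, TTCaux (ttcFav P) (S \ C) j = TTC P j := by
        intro j hj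
        rw [← TTCaux_of_not_mem_cyclic (Finset.mem_sdiff.mp hj).2]
        exact hcompat j (Finset.mem_sdiff.mp hj).1
      refine ih (S \ C) (Finset.sdiff_ssubset (cyclicAgents_subset _ _) hCne) hcompat'
        K2 ?_ σ hbij2 (fun j hj => hle j (Finset.mem_sdiff.mp hj).1) i
        (Finset.mem_sdiff.mpr ⟨hiK, hiC⟩)
      intro j hj
      obtain ⟨hjK, hjC⟩ := Finset.mem_sdiff.mp hj
      exact Finset.mem_sdiff.mpr ⟨hKS hjK, hjC⟩

lemma TTC_core [Fintype I] (P : I → LinearOrder I) (K : Finset I) (σ : I → I)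
    (hσ : Set.BijOn σ ↑K ↑K) (hle : ∀ i ∈ K, (P i).le (TTC P i) (σ i)) :
    ∀ i ∈ K, σ i = TTC P i :=
  TTC_core_aux P Finset.univ (fun _ _ => rfl) K (Finset.subset_univ K) σ hσ hle

end CoreLemmas

section GspLu
variable {I : Type*} [DecidableEq I]

lemma periodic_of_injOn {g : I → I} {S : Finset I} (hmaps : ∀ j ∈ S, g j ∈ S)
    (hinj : Set.InjOn g ↑S) {i : I} (hi : i ∈ S) : ∃ m, 0 < m ∧ g^[m] i = i := by
  have hstrip : ∀ a b, a ≤ b → g^[a] i = g^[b] i → g^[b - a] i = i := by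
    intro a
    induction a with
    | zero => intro b _ h; rw [Nat.sub_zero]; exact h.symm
    | succ a iha =>
      intro b hab h
      have hb : b = (b - 1) + 1 := by omega
      rw [Function.iterate_succ_apply', hb, Function.iterate_succ_apply'] at h
      have h' : g^[a] i = g^[b - 1] i :=
        hinj (Finset.mem_coe.mpr (iterate_mem hmaps hi a))
          (Finset.mem_coe.mpr (iterate_mem hmaps hi (b - 1))) h
      have := iha (b - 1) (by omega) h'
      rwa [show b - (a + 1) = b - 1 - a by omega]
  have hmaps' : ∀ t ∈ Finset.range (S.card + 1), g^[t] i ∈ S := fun t _ => iterate_mem hmaps hi t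
  have hcard : S.card < (Finset.range (S.card + 1)).card := by simp
  obtain ⟨a, _, b, _, hne, heq⟩ :=
    Finset.exists_ne_map_eq_of_card_lt_of_maps_to hcard hmaps'
  rcases Nat.lt_or_ge a b with hab | hab
  · exact ⟨b - a, by omega, hstrip a b (Nat.le_of_lt hab) heq⟩
  · have : b < a := by omega
    exact ⟨a - b, by omega, hstrip b a (Nat.le_of_lt this) heq.symm⟩

lemma TTC_lu [Fintype I] (P : I → LinearOrder I) (J : Finset I) (μ : I → I)
    (hbij : Set.BijOn μ ↑J ↑J) (htop : ∀ i ∈ J, μ i = topOf (P i) i) :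
    ∀ i ∈ J, TTC P i = μ i := by
  intro i hi
  set g := fun j => ttcFav P j Finset.univ with hgdef
  have heq : ∀ j ∈ J, g j = μ j := by
    intro j hj
    rw [htop j hj]
    rfl
  have hmaps : ∀ j ∈ J, g j ∈ J := by
    intro j hj; rw [heq j hj]; exact hbij.mapsTo hj
  have hinj : Set.InjOn g ↑J := by
    intro a ha b hb hab
    rw [heq a ha, heq b hb] at hab
    exact hbij.injOn ha hb hab
  obtain ⟨m, hm, hper⟩ := periodic_of_injOn hmaps hinj hi
  have hcyc : i ∈ cyclicAgents (ttcFav P) Finset.univ :=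
    mem_cyclicAgents_of_periodic (ttcFav_mem P Finset.univ) (Finset.mem_univ i) hm hper
  rw [TTC_def, TTCaux_of_mem_cyclic hcyc, ← heq i hi]

lemma TTC_gsp_aux [Fintype I] (P P' : I → LinearOrder I) (J : Finset I)
    (hoff : ∀ i ∉ J, P' i = P i)
    (hweak : ∀ i ∈ J, (P i).le (TTC P i) (TTC P' i)) :
    ∀ S : Finset I,
      (∀ i ∈ S, TTCaux (ttcFav P') S i = TTC P' i) →
      (∀ i ∉ S, TTC P' i = TTC P i) →
      (∀ i ∉ S, TTC P i ∉ S) →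
      ∀ i ∈ S, TTC P' i = TTC P i := by
  intro S
  induction S using Finset.strongInduction with
  | _ S ih =>
    intro h1 h2 h3 i hiS
    have hg' := ttcFav_mem P' S
    set C := cyclicAgents (ttcFav P') S with hCdef
    have hCne : C.Nonempty := cyclicAgents_nonempty hg' ⟨i, hiS⟩
    have hTin : ∀ j ∈ S, TTC P j ∈ S := mapsTo_of_compl (TTC_injective P) h3
    set σ := fun j => ttcFav P' j S with hσdef
    have hC'eq : ∀ j ∈ C, TTC P' j = σ j := by
      intro j hj
      rw [← h1 j (cyclicAgents_subset _ _ hj), TTCaux_of_mem_cyclic hj]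
    have hle : ∀ j ∈ C, (P j).le (TTC P j) (σ j) := by
      intro j hj
      by_cases hjJ : j ∈ J
      · rw [← hC'eq j hj]; exact hweak j hjJ
      · have : σ j = favIn (P j) S j := by
          show favIn (P' j) S j = favIn (P j) S j
          rw [hoff j hjJ]
        rw [this]
        exact le_favIn (P j) (hTin j (cyclicAgents_subset _ _ hj)) j
    have hbij : Set.BijOn σ ↑C ↑C := cyclicAgents_bijOn hg'
    have hCfix : ∀ j ∈ C, TTC P' j = TTC P j := by
      intro j hj
      rw [hC'eq j hj]
      exact TTC_core P C σ hbij hle j hj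
    by_cases hiC : i ∈ C
    · exact hCfix i hiC
    · refine ih (S \ C) (Finset.sdiff_ssubset (cyclicAgents_subset _ _) hCne) ?_ ?_ ?_ i
        (Finset.mem_sdiff.mpr ⟨hiS, hiC⟩)
      · intro j hj
        rw [← TTCaux_of_not_mem_cyclic (Finset.mem_sdiff.mp hj).2]
        exact h1 j (Finset.mem_sdiff.mp hj).1
      · intro j hj
        by_cases hjS : j ∈ S
        · have hjC : j ∈ C := by
            by_contra hjC
            exact hj (Finset.mem_sdiff.mpr ⟨hjS, hjC⟩)
          exact hCfix j hjC
        · exact h2 j hjS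
      · intro j hj
        by_cases hjS : j ∈ S
        · have hjC : j ∈ C := by
            by_contra hjC
            exact hj (Finset.mem_sdiff.mpr ⟨hjS, hjC⟩)
          have : TTC P j = σ j := (hCfix j hjC).symm.trans (hC'eq j hjC)
          rw [this]
          intro hmem
          exact (Finset.mem_sdiff.mp hmem).2 (hbij.mapsTo hjC)
        · intro hmem
          exact h3 j hjS ((Finset.mem_sdiff.mp hmem).1)

lemma TTC_gsp [Fintype I] (P P' : I → LinearOrder I) (J : Finset I)
    (hoff : ∀ i ∉ J, P' i = P i)
    (hweak : ∀ i ∈ J, (P i).le (TTC P i) (TTC P' i)) :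
    ∀ i, TTC P' i = TTC P i := fun i =>
  TTC_gsp_aux P P' J hoff hweak Finset.univ (fun _ _ => rfl)
    (fun j hj => absurd (Finset.mem_univ j) hj)
    (fun j hj => absurd (Finset.mem_univ j) hj) i (Finset.mem_univ i)

end GspLu

section Forward
variable {I : Type*} [DecidableEq I]

lemma fwd_aux [Fintype I] (hI : (Finset.univ : Finset I).Nonempty)
    (D : Set (LinearOrder I)) (hD : TopOneRich D)
    (ψ : (I → LinearOrder I) → I → I)
    (hψ : ∀ P : I → LinearOrder I, (∀ i, P i ∈ D) → Function.Bijective (ψ P))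
    (hLU : LocallyUnanimous D ψ) (hGSP : GroupStrategyProof D ψ)
    (P : I → LinearOrder I) (hP : ∀ i, P i ∈ D) :
    ∀ S : Finset I,
      (∀ i ∉ S, ψ P i = TTC P i) →
      (∀ i ∉ S, TTC P i ∉ S) →
      (∀ i ∈ S, TTCaux (ttcFav P) S i = TTC P i) →
      ∀ i ∈ S, ψ P i = TTC P i := by
  intro S
  induction S using Finset.strongInduction with
  | _ S ih =>
    intro h1 h2 h3 i hiS
    have hg := ttcFav_mem P S
    set C := cyclicAgents (ttcFav P) S with hCdef
    have hCne : C.Nonempty := cyclicAgents_nonempty hg ⟨i, hiS⟩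
    -- the deviation profile: cyclic agents report a preference topping their TTC object
    set q : I → LinearOrder I := fun o => (hD o).choose with hqdef
    have hqD : ∀ o, q o ∈ D := fun o => (hD o).choose_spec.1
    have hqtop : ∀ o d, topOf (q o) d = o := fun o d =>
      (topOf_indep (q o) hI d o).trans (hD o).choose_spec.2
    set P' : I → LinearOrder I := fun j => if j ∈ C then q (ttcFav P j S) else P j with hP'def
    have hP' : ∀ j, P' j ∈ D := by
      intro j
      show (if j ∈ C then q (ttcFav P j S) else P j) ∈ D
      split
      · exact hqD _
      · exact hP j
    have hoff : ∀ j ∉ C, P' j = P j := by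
      intro j hj
      show (if j ∈ C then q (ttcFav P j S) else P j) = P j
      rw [if_neg hj]
    set μ' : I → I := fun j => topOf (P' j) j with hμ'def
    have hμC : ∀ j ∈ C, μ' j = ttcFav P j S := by
      intro j hj
      show topOf (P' j) j = ttcFav P j S
      have : P' j = q (ttcFav P j S) := by
        show (if j ∈ C then q (ttcFav P j S) else P j) = _
        rw [if_pos hj]
      rw [this, hqtop]
    have hbijμ : Set.BijOn μ' ↑C ↑C :=
      (cyclicAgents_bijOn hg).congr (fun j hj => (hμC j hj).symm)
    have hLUres : ∀ j ∈ C, ψ P' j = μ' j :=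
      hLU P' hP' C hCne μ' hbijμ (fun _ _ => rfl)
    have hψS : ∀ j ∈ S, ψ P j ∈ S := by
      refine mapsTo_of_compl (hψ P hP).1 ?_
      intro j hj
      rw [h1 j hj]
      exact h2 j hj
    have hTC : ∀ j ∈ C, TTC P j = ttcFav P j S := by
      intro j hj
      rw [← h3 j (cyclicAgents_subset _ _ hj), TTCaux_of_mem_cyclic hj]
    have hψP' : ∀ j ∈ C, ψ P' j = TTC P j := by
      intro j hj
      rw [hLUres j hj, hμC j hj, ← hTC j hj]
    have hwk : ∀ j ∈ C, (P j).le (ψ P j) (ψ P' j) := by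
      intro j hj
      rw [hLUres j hj, hμC j hj]
      exact le_favIn (P j) (hψS j (cyclicAgents_subset _ _ hj)) j
    have hfixC : ∀ j ∈ C, ψ P j = TTC P j := by
      by_contra hcon
      push_neg at hcon
      obtain ⟨j, hj, hne⟩ := hcon
      have hlt : (P j).lt (ψ P j) (ψ P' j) := by
        refine @lt_of_le_of_ne I (P j).toPartialOrder _ _ (hwk j hj) ?_
        rw [hψP' j hj]
        exact hne
      exact hGSP P P' hP hP' C hCne hoff ⟨hwk, j, hj, hlt⟩
    by_cases hiC : i ∈ C
    · exact hfixC i hiC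
    · refine ih (S \ C) (Finset.sdiff_ssubset (cyclicAgents_subset _ _) hCne) ?_ ?_ ?_ i
        (Finset.mem_sdiff.mpr ⟨hiS, hiC⟩)
      · intro j hj
        by_cases hjS : j ∈ S
        · have hjC : j ∈ C := by
            by_contra hjC
            exact hj (Finset.mem_sdiff.mpr ⟨hjS, hjC⟩)
          exact hfixC j hjC
        · exact h1 j hjS
      · intro j hj
        by_cases hjS : j ∈ S
        · have hjC : j ∈ C := by
            by_contra hjC
            exact hj (Finset.mem_sdiff.mpr ⟨hjS, hjC⟩)
          rw [hTC j hjC]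
          intro hmem
          exact (Finset.mem_sdiff.mp hmem).2 (cyclicAgents_mapsTo hg hjC)
        · intro hmem
          exact h2 j hjS (Finset.mem_sdiff.mp hmem).1
      · intro j hj
        rw [← TTCaux_of_not_mem_cyclic (Finset.mem_sdiff.mp hj).2]
        exact h3 j (Finset.mem_sdiff.mp hj).1

end Forward

/-- On any preference domain satisfying Top-one Richness, a
mechanism is locally unanimous and group strategy-proof if and only if it
equals the TTC mechanism. -/
theorem stmt_2 {I : Type*} [DecidableEq I] [Fintype I] (hn : 3 ≤ Fintype.card I)
    (D : Set (LinearOrder I)) (hD : TopOneRich D)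
    (ψ : (I → LinearOrder I) → I → I)
    (hψ : ∀ P : I → LinearOrder I, (∀ i, P i ∈ D) → Function.Bijective (ψ P)) :
    (LocallyUnanimous D ψ ∧ GroupStrategyProof D ψ) ↔
      ∀ P : I → LinearOrder I, (∀ i, P i ∈ D) → ψ P = TTC P := by
  have hI : (Finset.univ : Finset I).Nonempty := by
    have hpos : 0 < Fintype.card I := by omega
    exact Finset.univ_nonempty_iff.mpr (Fintype.card_pos_iff.mp hpos)
  constructor
  · rintro ⟨hLU, hGSP⟩ P hP
    funext i
    exact fwd_aux hI D hD ψ hψ hLU hGSP P hP Finset.univ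
      (fun j hj => absurd (Finset.mem_univ j) hj)
      (fun j hj => absurd (Finset.mem_univ j) hj)
      (fun _ _ => rfl) i (Finset.mem_univ i)
  · intro hTTC
    constructor
    · intro P hP J hJne μ hbij htop i hi
      rw [hTTC P hP]
      exact TTC_lu P J μ hbij htop i hi
    · rintro P P' hP hP' J hJne hoff ⟨hw, j, hj, hs⟩
      have hall := TTC_gsp P P' J hoff (fun i hi => by
        rw [← hTTC P hP, ← hTTC P' hP']; exact hw i hi)
      rw [hTTC P hP, hTTC P' hP', hall j] at hs
      exact @lt_irrefl I (P j).toPreorder _ hs
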